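/- arXiv:1706.08294 — 6 statements merged into one kernel-verified Lean document; each statement's English description precedes it below -/
import Mathlib

section
/- Let ξ be a (1,2)-tensor on an n-dimensional inner product space V with ξ_X ∈ so(V) for each X, and let (e_i) be an orthonormal basis. Define χ = Σ_i ξ_{e_i} e_i, ξ^alt_X Y = (1/2)(ξ_X Y - ξ_Y X), ξ^sym_X Y = (1/2)(ξ_X Y + ξ_Y X). Then Σ_{i,j} ⟨[ξ_{e_i}, ξ_{e_j}] e_j, e_i⟩ = -|χ|² + |ξ^sym|² - |ξ^alt|², where |ξ^sym|² = Σ_{i,j} |ξ^sym_{e_i} e_j|² and similarly for ξ^alt. -/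
/-!
Skew-symmetry moves `ξ_{e_i}` to the other side of the inner product. In the first half of the
commutator this turns `Σ_{i,j} ⟨ξ_{e_i} ξ_{e_j} e_j, e_i⟩` into `-⟨χ, χ⟩`; in the second half it
turns `-Σ_{i,j} ⟨ξ_{e_j} ξ_{e_i} e_j, e_i⟩` into `Σ_{i,j} ⟨ξ_{e_i} e_j, ξ_{e_j} e_i⟩`, which by
polarization `|(a + b)/2|² - |(a - b)/2|² = ⟨a, b⟩` is `|ξ^sym|² - |ξ^alt|²`.
-/

open RealInnerProductSpace Finset

theorem real_inner_half_add_self_sub_real_inner_half_sub_self {F : Type*}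
    [NormedAddCommGroup F] [InnerProductSpace ℝ F] (a b : F) :
    ⟪(1/2 : ℝ) • (a + b), (1/2 : ℝ) • (a + b)⟫ - ⟪(1/2 : ℝ) • (a - b), (1/2 : ℝ) • (a - b)⟫
      = ⟪a, b⟫ := by
  simp only [real_inner_smul_left, real_inner_smul_right, inner_add_left, inner_add_right,
    inner_sub_left, inner_sub_right, real_inner_comm a b]
  ring

section SkewBilinear

variable {V ι : Type*} [NormedAddCommGroup V] [InnerProductSpace ℝ V] [Fintype ι]
  {ξ : V →ₗ[ℝ] V →ₗ[ℝ] V} (hskew : ∀ X Y Z, ⟪ξ X Y, Z⟫ = -⟪Y, ξ X Z⟫) (e : ι → V)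
include hskew

theorem sum_inner_apply_self_eq_neg_inner_trace (v : V) :
    ∑ i, ⟪ξ (e i) v, e i⟫ = -⟪v, ∑ i, ξ (e i) (e i)⟫ := by
  simp only [hskew, inner_sum, sum_neg_distrib]

theorem sum_inner_commutator_apply_eq :
    ∑ i, ∑ j, ⟪ξ (e i) (ξ (e j) (e j)) - ξ (e j) (ξ (e i) (e j)), e i⟫
      = -⟪∑ i, ξ (e i) (e i), ∑ i, ξ (e i) (e i)⟫
        + ∑ i, ∑ j, ⟪ξ (e i) (e j), ξ (e j) (e i)⟫ := by
  have htrace : ∑ i, ∑ j, ⟪ξ (e i) (ξ (e j) (e j)), e i⟫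
      = -⟪∑ i, ξ (e i) (e i), ∑ i, ξ (e i) (e i)⟫ := by
    simp only [← sum_inner, ← map_sum]
    exact sum_inner_apply_self_eq_neg_inner_trace hskew e _
  rw [← htrace, ← sum_add_distrib]
  refine sum_congr rfl fun i _ => ?_
  rw [← sum_add_distrib]
  refine sum_congr rfl fun j _ => ?_
  rw [inner_sub_left, hskew (e j) (ξ (e i) (e j)), sub_neg_eq_add]

end SkewBilinear

/-- For a bilinear `ξ` with each `ξ_X ∈ so(V)`,
`Σ_{i,j} ⟨[ξ_{e_i}, ξ_{e_j}] e_j, e_i⟩ = -|χ|² + |ξ^sym|² - |ξ^alt|²`,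
where `χ = Σ_i ξ_{e_i} e_i`. -/
theorem stmt4 {V : Type*} [NormedAddCommGroup V] [InnerProductSpace ℝ V]
    {m : ℕ} (e : OrthonormalBasis (Fin m) ℝ V)
    (ξ : V →ₗ[ℝ] V →ₗ[ℝ] V)
    (hskew : ∀ X Y Z, ⟪ξ X Y, Z⟫ = -⟪Y, ξ X Z⟫) :
    let χ := ∑ i, ξ (e i) (e i)
    let ξalt : V → V → V := fun X Y => (1/2 : ℝ) • (ξ X Y - ξ Y X)
    let ξsym : V → V → V := fun X Y => (1/2 : ℝ) • (ξ X Y + ξ Y X)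
    (∑ i, ∑ j, ⟪ξ (e i) (ξ (e j) (e j)) - ξ (e j) (ξ (e i) (e j)), e i⟫)
      = -⟪χ, χ⟫ + (∑ i, ∑ j, ⟪ξsym (e i) (e j), ξsym (e i) (e j)⟫)
        - (∑ i, ∑ j, ⟪ξalt (e i) (e j), ξalt (e i) (e j)⟫) := by
  intro χ ξalt ξsym
  have hpolar : ∀ i j, ⟪ξsym (e i) (e j), ξsym (e i) (e j)⟫ - ⟪ξalt (e i) (e j), ξalt (e i) (e j)⟫
      = ⟪ξ (e i) (e j), ξ (e j) (e i)⟫ := fun i j =>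
    real_inner_half_add_self_sub_real_inner_half_sub_self _ _
  rw [sum_inner_commutator_apply_eq hskew e, add_sub_assoc, ← sum_sub_distrib]
  simp only [← sum_sub_distrib, hpolar]
  rfl
end

section
/- For a W₄-type tensor ξ defined by -4ξ_X Y = θ(Y)X + θ(JY)JX - ⟨X,Y⟩θ^♯ - ⟨X,JY⟩Jθ^♯ on a 2n-dimensional inner product space with orthogonal complex structure J, the quadratic invariants satisfy i₂ := Σ_{i,j,k}⟨ξ_{e_i}e_j,e_k⟩⟨ξ_{e_j}e_i,e_k⟩ = 0 and i₄ := |Σ_i ξ_{e_i}e_i|² = ((n-1)/2) i₁, where i₁ = Σ_{i,j,k}⟨ξ_{e_i}e_j,e_k⟩². -/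
/-!
Write `-4 ξ_X Y = ⟨Y,θ⟩X + ⟨JY,θ⟩JX - ⟨X,Y⟩θ - ⟨X,JY⟩Jθ`. For fixed `X` this is a sum of
rank-one maps in `Y`, so by Parseval (`∑ⱼ ⟨b,eⱼ⟩ L eⱼ = L b` for linear `L`) every sum over
the basis collapses to inner products of `X`, `θ` and `Jθ`. For every `X` one gets
`∑ⱼ |ξ_X eⱼ|² = (|X|²|θ|² - ⟨X,θ⟩² - ⟨X,Jθ⟩²)/4` and `∑ⱼ ⟨ξ_X eⱼ, ξ_{eⱼ} X⟩ = 0`, while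
`∑ᵢ ξ_{eᵢ} eᵢ = ((2n-2)/4) θ`. Hence `i₁ = ((n-1)/2)|θ|²`, `i₂ = 0` and
`i₄ = ((n-1)/2)²|θ|²`.
-/

open RealInnerProductSpace

section W4

variable {ι V : Type*} [Fintype ι] [NormedAddCommGroup V] [InnerProductSpace ℝ V]

theorem OrthonormalBasis.sum_inner_smul_map (e : OrthonormalBasis ι ℝ V) (L : V →ₗ[ℝ] V)
    (a : V) : ∑ i, ⟪e i, a⟫ • L (e i) = L a := by
  simp only [← map_smul, ← map_sum, e.sum_repr']

theorem OrthonormalBasis.sum_inner_mul_inner_map (e : OrthonormalBasis ι ℝ V)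
    (L : V →ₗ[ℝ] V) (a b : V) : ∑ i, ⟪e i, b⟫ * ⟪a, L (e i)⟫ = ⟪a, L b⟫ := by
  simp only [← real_inner_smul_right, ← inner_sum, e.sum_inner_smul_map]

theorem OrthonormalBasis.sum_inner_mul_inner_right (e : OrthonormalBasis ι ℝ V) (x y : V) :
    ∑ k, ⟪x, e k⟫ * ⟪y, e k⟫ = ⟪x, y⟫ := by
  rw [← e.sum_inner_mul_inner]
  exact Finset.sum_congr rfl fun k _ => by rw [real_inner_comm (e k) y]

section ComplexStructure

variable {J : V →ₗ[ℝ] V}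

theorem inner_map_left_eq_neg_of_isometry (hJ2 : ∀ X, J (J X) = -X)
    (hJm : ∀ X Y, ⟪J X, J Y⟫ = ⟪X, Y⟫) (X Y : V) : ⟪J X, Y⟫ = -⟪X, J Y⟫ := by
  rw [← hJm, hJ2, inner_neg_left]

theorem inner_map_self_eq_zero_of_skew (hJ : ∀ X Y, ⟪J X, Y⟫ = -⟪X, J Y⟫) (X : V) :
    ⟪X, J X⟫ = 0 := by
  have := hJ X X
  rw [real_inner_comm] at this
  linarith

end ComplexStructure

/-- `(X, Y) ↦ ξ_X Y`, bundled as a bilinear map so that `Y ↦ ξ_Y X` is linear too, which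
lets Parseval handle `∑ⱼ ⟨ξ_X eⱼ, ξ_{eⱼ} X⟩`. -/
noncomputable def w4Tensor (J : V →ₗ[ℝ] V) (θ : V) : V →ₗ[ℝ] V →ₗ[ℝ] V :=
  LinearMap.mk₂ ℝ
    (fun X Y => (-(1 / 4) : ℝ) • (⟪Y, θ⟫ • X + ⟪J Y, θ⟫ • J X - ⟪X, Y⟫ • θ - ⟪X, J Y⟫ • J θ))
    (fun X X' Y => by simp only [map_add, inner_add_left]; module)
    (fun c X Y => by simp only [map_smul, real_inner_smul_left]; module)
    (fun X Y Y' => by simp only [map_add, inner_add_left, inner_add_right]; module)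
    (fun c X Y => by simp only [map_smul, real_inner_smul_left, real_inner_smul_right]; module)

theorem w4Tensor_apply (J : V →ₗ[ℝ] V) (θ X Y : V) : w4Tensor J θ X Y =
    (-(1 / 4) : ℝ) • (⟪Y, θ⟫ • X + ⟪J Y, θ⟫ • J X - ⟪X, Y⟫ • θ - ⟪X, J Y⟫ • J θ) := rfl

namespace OrthonormalBasis

variable {J : V →ₗ[ℝ] V}

theorem sum_inner_w4Tensor_apply (e : OrthonormalBasis ι ℝ V)
    (hJ : ∀ X Y, ⟪J X, Y⟫ = -⟪X, J Y⟫) (L : V →ₗ[ℝ] V) (θ X : V) :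
    ∑ j, ⟪w4Tensor J θ X (e j), L (e j)⟫ =
      -(1 / 4) * (⟪X, L θ⟫ - ⟪J X, L (J θ)⟫ - ⟪θ, L X⟫ + ⟪J θ, L (J X)⟫) := by
  have hsummand : ∀ j, ⟪w4Tensor J θ X (e j), L (e j)⟫ = -(1 / 4) *
      (⟪e j, θ⟫ * ⟪X, L (e j)⟫ - ⟪e j, J θ⟫ * ⟪J X, L (e j)⟫ - ⟪e j, X⟫ * ⟪θ, L (e j)⟫
        + ⟪e j, J X⟫ * ⟪J θ, L (e j)⟫) := fun j => by
    have hXJ : ⟪X, J (e j)⟫ = -⟪e j, J X⟫ := by rw [real_inner_comm, hJ]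
    simp only [w4Tensor_apply, real_inner_smul_left, inner_add_left, inner_sub_left, hJ (e j) θ,
      hXJ, real_inner_comm (e j) X]
    ring
  simp only [hsummand, ← Finset.mul_sum, Finset.sum_add_distrib, Finset.sum_sub_distrib,
    e.sum_inner_mul_inner_map]

theorem sum_inner_self_w4Tensor_apply (e : OrthonormalBasis ι ℝ V)
    (hJ2 : ∀ X, J (J X) = -X) (hJ : ∀ X Y, ⟪J X, Y⟫ = -⟪X, J Y⟫) (θ X : V) :
    ∑ j, ⟪w4Tensor J θ X (e j), w4Tensor J θ X (e j)⟫ =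
      (⟪X, X⟫ * ⟪θ, θ⟫ - ⟪X, θ⟫ ^ 2 - ⟪X, J θ⟫ ^ 2) / 4 := by
  rw [e.sum_inner_w4Tensor_apply hJ]
  have hθX : ⟪θ, J X⟫ = -⟪X, J θ⟫ := by rw [real_inner_comm, hJ]
  simp only [w4Tensor_apply, map_add, map_sub, map_smul, real_inner_smul_right,
    inner_add_right, inner_sub_right, inner_neg_left, inner_neg_right, hJ, hJ2,
    inner_map_self_eq_zero_of_skew hJ, hθX, real_inner_comm X θ]
  ring

theorem sum_inner_w4Tensor_apply_flip (e : OrthonormalBasis ι ℝ V)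
    (hJ2 : ∀ X, J (J X) = -X) (hJ : ∀ X Y, ⟪J X, Y⟫ = -⟪X, J Y⟫) (θ X : V) :
    ∑ j, ⟪w4Tensor J θ X (e j), w4Tensor J θ (e j) X⟫ = 0 := by
  have h := e.sum_inner_w4Tensor_apply hJ ((w4Tensor J θ).flip X) θ X
  simp only [LinearMap.flip_apply] at h
  rw [h]
  have hθX : ⟪θ, J X⟫ = -⟪X, J θ⟫ := by rw [real_inner_comm, hJ]
  simp only [w4Tensor_apply, map_add, map_sub, map_smul, map_neg, real_inner_smul_right,
    inner_add_right, inner_sub_right, inner_neg_right, hJ, hJ2,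
    inner_map_self_eq_zero_of_skew hJ, hθX, real_inner_comm X θ]
  ring

theorem sum_sum_inner_self_w4Tensor_apply (e : OrthonormalBasis ι ℝ V)
    (hJ2 : ∀ X, J (J X) = -X) (hJ : ∀ X Y, ⟪J X, Y⟫ = -⟪X, J Y⟫) (θ : V) :
    ∑ i, ∑ j, ⟪w4Tensor J θ (e i) (e j), w4Tensor J θ (e i) (e j)⟫ =
      ((Fintype.card ι : ℝ) - 2) / 4 * ⟪θ, θ⟫ := by
  have hJθ : ‖J θ‖ ^ 2 = ⟪θ, θ⟫ := by
    rw [← real_inner_self_eq_norm_sq, hJ, hJ2, inner_neg_right, neg_neg]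
  simp only [e.sum_inner_self_w4Tensor_apply hJ2 hJ, e.inner_eq_one, ← Finset.sum_div,
    Finset.sum_sub_distrib, e.sum_sq_inner_right, hJθ, ← real_inner_self_eq_norm_sq,
    Finset.sum_const, Finset.card_univ, nsmul_eq_mul]
  ring

theorem sum_w4Tensor_apply_self (e : OrthonormalBasis ι ℝ V)
    (hJ2 : ∀ X, J (J X) = -X) (hJ : ∀ X Y, ⟪J X, Y⟫ = -⟪X, J Y⟫) (θ : V) :
    ∑ i, w4Tensor J θ (e i) (e i) = (((Fintype.card ι : ℝ) - 2) / 4) • θ := by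
  have hsummand : ∀ i, w4Tensor J θ (e i) (e i) =
      (-(1 / 4) : ℝ) • (⟪e i, θ⟫ • e i - ⟪e i, J θ⟫ • J (e i) - θ) := fun i => by
    simp only [w4Tensor_apply, hJ, e.inner_eq_one, inner_map_self_eq_zero_of_skew hJ]
    module
  simp only [hsummand, ← Finset.smul_sum, Finset.sum_sub_distrib, e.sum_repr',
    e.sum_inner_smul_map J, hJ2, Finset.sum_const, Finset.card_univ]
  module

end OrthonormalBasis

end W4

/-- For the W₄-type tensor `ξ` defined by
`-4ξ_X Y = θ(Y)X + θ(JY)JX - ⟨X,Y⟩θ♯ - ⟨X,JY⟩Jθ♯`, the quadratic invariants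
satisfy `i₂ = 0` and `i₄ = ((n-1)/2) i₁`. -/
theorem stmt8 {V : Type*} [NormedAddCommGroup V] [InnerProductSpace ℝ V]
    (n : ℕ) (e : OrthonormalBasis (Fin (2*n)) ℝ V)
    (J : V →ₗ[ℝ] V)
    (hJ2 : ∀ X, J (J X) = -X)
    (hJm : ∀ X Y, ⟪J X, J Y⟫ = ⟪X, Y⟫)
    (θs : V) (θ : V → ℝ) (hθ : ∀ X, θ X = ⟪X, θs⟫)
    (ξ : V → V → V)
    (hξ : ∀ X Y, (-4 : ℝ) • ξ X Y
      = θ Y • X + θ (J Y) • J X - ⟪X, Y⟫ • θs - ⟪X, J Y⟫ • J θs) :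
    let i₁ : ℝ := ∑ i, ∑ j, ∑ k, ⟪ξ (e i) (e j), e k⟫ ^ 2
    let i₂ : ℝ := ∑ i, ∑ j, ∑ k, ⟪ξ (e i) (e j), e k⟫ * ⟪ξ (e j) (e i), e k⟫
    let i₄ : ℝ := ⟪∑ i, ξ (e i) (e i), ∑ i, ξ (e i) (e i)⟫
    i₂ = 0 ∧ i₄ = (((n : ℝ) - 1)/2) * i₁ := by
  intro i₁ i₂ i₄
  have hJ := inner_map_left_eq_neg_of_isometry hJ2 hJm
  obtain rfl : ξ = fun X Y => w4Tensor J θs X Y := by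
    funext X Y
    rw [w4Tensor_apply, ← hθ, ← hθ, ← hξ, smul_smul]
    norm_num
  have hdim : ((Fintype.card (Fin (2 * n)) : ℝ) - 2) / 4 = ((n : ℝ) - 1) / 2 := by
    rw [Fintype.card_fin]; push_cast; ring
  have hi₁ : i₁ = ((n : ℝ) - 1) / 2 * ⟪θs, θs⟫ := by
    simp only [i₁, sq, e.sum_inner_mul_inner_right, e.sum_sum_inner_self_w4Tensor_apply hJ2 hJ,
      hdim]
  constructor
  · simp only [i₂, e.sum_inner_mul_inner_right, e.sum_inner_w4Tensor_apply_flip hJ2 hJ,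
      Finset.sum_const_zero]
  · simp only [i₄, hi₁, e.sum_w4Tensor_apply_self hJ2 hJ, hdim, real_inner_smul_left,
      real_inner_smul_right]
end

section
/- Let ξ be a bilinear V-valued map on an inner product space V with each ξ_X skew-symmetric, and suppose the cyclic sum vanishes: ⟨ξ_X Y, Z⟩ + ⟨ξ_Z X, Y⟩ + ⟨ξ_Y Z, X⟩ = 0 for all X,Y,Z (the W₂ condition). Then Σ_{i,j}⟨ξ_{e_i}e_j, ξ_{e_j}e_i⟩ = (1/2)|ξ|², i.e. i₂ = (1/2)i₁. -/
open RealInnerProductSpace Finset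

section CyclicTensor

variable {ι : Type*} [Fintype ι]

lemma sum_sum_sum_rotate (f : ι → ι → ι → ℝ) :
    ∑ i, ∑ j, ∑ k, f i j k = ∑ i, ∑ j, ∑ k, f j k i :=
  calc ∑ i, ∑ j, ∑ k, f i j k
      = ∑ i, ∑ k, ∑ j, f i j k := sum_congr rfl fun _ _ => sum_comm
    _ = ∑ k, ∑ i, ∑ j, f i j k := sum_comm

/-- Swapping the first two slots gives `T j i k = T i j k + T k i j`, so the left side is
`A + B` with `A = ∑ (T i j k)²` and `B = ∑ T i j k * T k i j`; contracting `T` with its cyclic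
sum gives `A + 2 B = 0`. -/
theorem sum_mul_swap_eq_half_sum_sq {T : ι → ι → ι → ℝ}
    (hskew : ∀ i j k, T i j k = -T i k j) (hcyc : ∀ i j k, T i j k + T k i j + T j k i = 0) :
    ∑ i, ∑ j, ∑ k, T i j k * T j i k = 1 / 2 * ∑ i, ∑ j, ∑ k, T i j k * T i j k := by
  have hswap : ∑ i, ∑ j, ∑ k, T i j k * T j i k
      = ∑ i, ∑ j, ∑ k, (T i j k * T i j k + T i j k * T k i j) :=
    sum_congr rfl fun i _ => sum_congr rfl fun j _ => sum_congr rfl fun k _ => by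
      rw [show T j i k = T i j k + T k i j by linarith [hcyc i j k, hskew j i k], mul_add]
  have hrot : ∑ i, ∑ j, ∑ k, T i j k * T j k i = ∑ i, ∑ j, ∑ k, T i j k * T k i j := by
    rw [sum_sum_sum_rotate fun i j k => T i j k * T k i j]
    simp only [mul_comm]
  have hcontract : ∑ i, ∑ j, ∑ k, T i j k * (T i j k + T k i j + T j k i) = 0 := by
    simp only [hcyc, mul_zero, sum_const_zero]
  simp only [mul_add, sum_add_distrib] at hswap hcontract
  linarith

end CyclicTensor

/-- If `ξ` is bilinear with each `ξ_X` skew-symmetric and the cyclic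
sum `⟨ξ_X Y, Z⟩ + ⟨ξ_Z X, Y⟩ + ⟨ξ_Y Z, X⟩` vanishes (the W₂ condition), then
`Σ_{i,j}⟨ξ_{e_i}e_j, ξ_{e_j}e_i⟩ = (1/2)|ξ|²`, i.e. `i₂ = (1/2) i₁`. -/
theorem stmt10 {V : Type*} [NormedAddCommGroup V] [InnerProductSpace ℝ V]
    {m : ℕ} (e : OrthonormalBasis (Fin m) ℝ V)
    (ξ : V →ₗ[ℝ] V →ₗ[ℝ] V)
    (hskew : ∀ X Y Z, ⟪ξ X Y, Z⟫ = -⟪Y, ξ X Z⟫)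
    (hcyc : ∀ X Y Z, ⟪ξ X Y, Z⟫ + ⟪ξ Z X, Y⟫ + ⟪ξ Y Z, X⟫ = 0) :
    (∑ i, ∑ j, ⟪ξ (e i) (e j), ξ (e j) (e i)⟫)
      = (1/2 : ℝ) * (∑ i, ∑ j, ⟪ξ (e i) (e j), ξ (e i) (e j)⟫) := by
  have hexpand (x y : V) : ⟪x, y⟫ = ∑ k, ⟪x, e k⟫ * ⟪y, e k⟫ := by
    simp only [← e.sum_inner_mul_inner x y, real_inner_comm (e _) y]
  have key := sum_mul_swap_eq_half_sum_sq (T := fun i j k => ⟪ξ (e i) (e j), e k⟫)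
    (fun i j k => by rw [hskew, real_inner_comm]) (fun i j k => hcyc _ _ _)
  convert key using 4 <;> exact hexpand _ _
end

section
/- Let V = R^{2n+1} with standard inner product, ζ = e_{2n+1}, and let φ ∈ End(V) satisfy φ² = -id + η⊗ζ and ⟨φX,φY⟩ = ⟨X,Y⟩ - η(X)η(Y), where η(X) = ⟨X,ζ⟩ (a linear almost contact metric structure). Define u(n) = {A ∈ so(2n+1) : Aφ = φA, Aζ = 0}. Then the orthogonal projection of A ∈ so(2n+1) onto the orthogonal complement u(n)^⊥ is A ↦ (1/2)(A + φAφ + η(A·)⊗ζ + η⊗Aζ). -/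
/-!
Write `η = ⟪·, ζ⟫`. From `φ² = -id + η ⊗ ζ` and `φζ = 0` one gets `η(ζ) ζ = ζ` and `η ∘ φ = 0`,
and the metric condition then makes `φ` skew. With these, `A - P A` is skew, commutes with `φ`
and kills `ζ` by direct computation. For `B ∈ 𝔲(n)` we have `η ∘ B = 0` and `Bφ² = -B`, so
`P A ∘ B = ½(AB + φ(ABφ) + η(AB·) ⊗ ζ)`, whose trace is `½(tr AB - tr AB + η(ABζ)) = 0`
by cyclicity of the trace.
-/

open RealInnerProductSpace

variable {E : Type*} [NormedAddCommGroup E] [InnerProductSpace ℝ E]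

structure IsAlmostContactMetric (φ : E →ₗ[ℝ] E) (ζ : E) : Prop where
  map_map : ∀ X, φ (φ X) = -X + ⟪X, ζ⟫ • ζ
  inner_map_map : ∀ X Y, ⟪φ X, φ Y⟫ = ⟪X, Y⟫ - ⟪X, ζ⟫ * ⟪Y, ζ⟫
  map_reeb : φ ζ = 0

structure MemUnitaryAlgebra (φ : E →ₗ[ℝ] E) (ζ : E) (B : E →ₗ[ℝ] E) : Prop where
  skew : ∀ X Y, ⟪B X, Y⟫ = -⟪X, B Y⟫
  map_comm : ∀ X, B (φ X) = φ (B X)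
  map_reeb : B ζ = 0

namespace IsAlmostContactMetric

variable {φ : E →ₗ[ℝ] E} {ζ : E} (hφ : IsAlmostContactMetric φ ζ)
include hφ

theorem inner_self_smul_reeb : ⟪ζ, ζ⟫ • ζ = ζ := by
  have h := hφ.map_map ζ
  rw [hφ.map_reeb, map_zero] at h
  rw [← sub_eq_zero, ← neg_add_eq_sub, ← h]

theorem inner_map_reeb (X : E) : ⟪φ X, ζ⟫ = 0 := by
  have h := hφ.map_map (φ X)
  rw [hφ.map_map X, map_add, map_neg, map_smul, hφ.map_reeb, smul_zero, add_zero,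
    left_eq_add] at h
  rw [← hφ.inner_self_smul_reeb, real_inner_smul_right, mul_comm, ← real_inner_smul_left, h,
    inner_zero_left]

theorem inner_map_left (X Y : E) : ⟪φ X, Y⟫ = -⟪X, φ Y⟫ := by
  have hY : Y = -φ (φ Y) + ⟪Y, ζ⟫ • ζ := by rw [hφ.map_map Y]; abel
  calc ⟪φ X, Y⟫ = -⟪φ X, φ (φ Y)⟫ + ⟪Y, ζ⟫ * ⟪φ X, ζ⟫ := by
        conv_lhs => rw [hY]
        rw [inner_add_right, inner_neg_right, real_inner_smul_right]
    _ = -⟪X, φ Y⟫ := by rw [hφ.inner_map_map, hφ.inner_map_reeb, hφ.inner_map_reeb]; ring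

end IsAlmostContactMetric

noncomputable def projPerp (φ A : E →ₗ[ℝ] E) (ζ : E) : E →ₗ[ℝ] E :=
  (1 / 2 : ℝ) • (A + φ ∘ₗ A ∘ₗ φ + ((innerₗ E).flip ζ ∘ₗ A).smulRight ζ +
    ((innerₗ E).flip ζ).smulRight (A ζ))

theorem projPerp_apply (φ A : E →ₗ[ℝ] E) (ζ x : E) :
    projPerp φ A ζ x = (1 / 2 : ℝ) • (A x + φ (A (φ x)) + ⟪A x, ζ⟫ • ζ + ⟪x, ζ⟫ • A ζ) :=
  rfl

variable {φ A : E →ₗ[ℝ] E} {ζ : E}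

theorem sub_projPerp_mem (hφ : IsAlmostContactMetric φ ζ)
    (hA : ∀ X Y, ⟪A X, Y⟫ = -⟪X, A Y⟫) : MemUnitaryAlgebra φ ζ (A - projPerp φ A ζ) where
  skew x y := by
    simp only [LinearMap.sub_apply, projPerp_apply, inner_sub_left, inner_sub_right,
      inner_add_left, inner_add_right, real_inner_smul_left, real_inner_smul_right,
      hφ.inner_map_left _ y, hφ.inner_map_left x, hA _ y, hA x, hA _ (φ y)]
    rw [real_inner_comm ζ y, real_inner_comm ζ (A y)]
    ring
  map_comm x := by
    simp only [LinearMap.sub_apply, projPerp_apply, map_sub, map_smul, map_add, map_neg,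
      hφ.map_map, hφ.map_reeb, hφ.inner_map_reeb, zero_smul, smul_zero, add_zero]
    module
  map_reeb := by
    have hAζ : ⟪A ζ, ζ⟫ = 0 := by
      have h := hA ζ ζ
      rw [real_inner_comm (A ζ) ζ] at h
      linarith
    rw [LinearMap.sub_apply, projPerp_apply, hφ.map_reeb, map_zero, map_zero, hAζ, zero_smul,
      ← map_smul, hφ.inner_self_smul_reeb]
    module

theorem projPerp_comp_apply {B : E →ₗ[ℝ] E} (hB : MemUnitaryAlgebra φ ζ B) (x : E) :
    projPerp φ A ζ (B x) =
      (1 / 2 : ℝ) • ((A ∘ₗ B) x + φ ((A ∘ₗ B ∘ₗ φ) x) + ⟪(A ∘ₗ B) x, ζ⟫ • ζ) := by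
  have hBζ : ⟪B x, ζ⟫ = 0 := by rw [hB.skew, hB.map_reeb, inner_zero_right, neg_zero]
  simp [projPerp_apply, hB.map_comm, hBζ]

theorem trace_projPerp_comp [FiniteDimensional ℝ E] (hφ : IsAlmostContactMetric φ ζ)
    {B : E →ₗ[ℝ] E} (hB : MemUnitaryAlgebra φ ζ B) :
    LinearMap.trace ℝ E (projPerp φ A ζ ∘ₗ B) = 0 := by
  have hsplit : projPerp φ A ζ ∘ₗ B = (1 / 2 : ℝ) •
      (A ∘ₗ B + φ ∘ₗ (A ∘ₗ B ∘ₗ φ) + ((innerₗ E).flip ζ ∘ₗ A ∘ₗ B).smulRight ζ) := by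
    ext x
    simp [projPerp_comp_apply hB, real_inner_comm ζ]
  have hBφφ : B ∘ₗ φ ∘ₗ φ = -B := by
    ext x
    simp [hφ.map_map, hB.map_reeb]
  have htr : LinearMap.trace ℝ E (φ ∘ₗ (A ∘ₗ B ∘ₗ φ)) = -LinearMap.trace ℝ E (A ∘ₗ B) := by
    rw [LinearMap.trace_comp_comm', LinearMap.comp_assoc, LinearMap.comp_assoc, hBφφ,
      LinearMap.comp_neg, map_neg]
  rw [hsplit, map_smul, map_add, map_add, htr, LinearMap.trace_smulRight]
  simp [hB.map_reeb]

theorem stmt12_general (n : ℕ)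
    (φ A : EuclideanSpace ℝ (Fin (2*n+1)) →ₗ[ℝ] EuclideanSpace ℝ (Fin (2*n+1)))
    (ζ : EuclideanSpace ℝ (Fin (2*n+1)))
    (hφ2 : ∀ X, φ (φ X) = -X + ⟪X, ζ⟫ • ζ)
    (hφm : ∀ X Y, ⟪φ X, φ Y⟫ = ⟪X, Y⟫ - ⟪X, ζ⟫ * ⟪Y, ζ⟫)
    (hφζ : φ ζ = 0)
    (hA : ∀ X Y, ⟪A X, Y⟫ = -⟪X, A Y⟫) :
    let P : EuclideanSpace ℝ (Fin (2*n+1)) → EuclideanSpace ℝ (Fin (2*n+1)) :=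
      fun x => (1/2 : ℝ) • (A x + φ (A (φ x)) + ⟪A x, ζ⟫ • ζ + ⟪x, ζ⟫ • A ζ)
    (∀ x y, ⟪A x - P x, y⟫ = -⟪x, A y - P y⟫) ∧
    (∀ x, A (φ x) - P (φ x) = φ (A x - P x)) ∧
    (A ζ - P ζ = 0) ∧
    (∀ B : EuclideanSpace ℝ (Fin (2*n+1)) →ₗ[ℝ] EuclideanSpace ℝ (Fin (2*n+1)),
      (∀ X Y, ⟪B X, Y⟫ = -⟪X, B Y⟫) → (∀ X, B (φ X) = φ (B X)) → B ζ = 0 →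
      -(∑ i, ⟪P (B (EuclideanSpace.single i 1)), EuclideanSpace.single i 1⟫) = 0) := by
  intro P
  have hφ : IsAlmostContactMetric φ ζ := ⟨hφ2, hφm, hφζ⟩
  obtain ⟨hskew, hcomm, hreeb⟩ := sub_projPerp_mem hφ hA
  refine ⟨hskew, hcomm, hreeb, fun B hB hBφ hBζ => ?_⟩
  have hsum : ∑ i, ⟪P (B (EuclideanSpace.single i 1)), EuclideanSpace.single i 1⟫ =
      LinearMap.trace ℝ _ (projPerp φ A ζ ∘ₗ B) := by
    rw [LinearMap.trace_eq_sum_inner _ (EuclideanSpace.basisFun _ ℝ)]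
    simp only [EuclideanSpace.basisFun_apply]
    exact Finset.sum_congr rfl fun i _ => real_inner_comm _ _
  rw [hsum, trace_projPerp_comp hφ ⟨hB, hBφ, hBζ⟩, neg_zero]

/-- For a linear almost contact metric structure `(φ, η, ζ)` on
`ℝ^{2n+1}` with `ζ = e_{2n+1}`, the orthogonal projection of a skew-symmetric `A`
onto `u(n)^⊥` (w.r.t. `⟨A,B⟩ = -tr(AB)`) is
`P A = (1/2)(A + φAφ + η(A·)⊗ζ + η⊗Aζ)`: namely `A - P A ∈ u(n)` (skew, commutes
with `φ`, kills `ζ`) and `P A` is orthogonal to every element of `u(n)`. -/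
theorem stmt12 (n : ℕ)
    (φ A : EuclideanSpace ℝ (Fin (2*n+1)) →ₗ[ℝ] EuclideanSpace ℝ (Fin (2*n+1)))
    (ζ : EuclideanSpace ℝ (Fin (2*n+1)))
    (hζ : ζ = EuclideanSpace.single (Fin.last (2*n)) 1)
    (hφ2 : ∀ X, φ (φ X) = -X + ⟪X, ζ⟫ • ζ)
    (hφm : ∀ X Y, ⟪φ X, φ Y⟫ = ⟪X, Y⟫ - ⟪X, ζ⟫ * ⟪Y, ζ⟫)
    (hφζ : φ ζ = 0)
    (hA : ∀ X Y, ⟪A X, Y⟫ = -⟪X, A Y⟫) :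
    let P : EuclideanSpace ℝ (Fin (2*n+1)) → EuclideanSpace ℝ (Fin (2*n+1)) :=
      fun x => (1/2 : ℝ) • (A x + φ (A (φ x)) + ⟪A x, ζ⟫ • ζ + ⟪x, ζ⟫ • A ζ)
    (∀ x y, ⟪A x - P x, y⟫ = -⟪x, A y - P y⟫) ∧
    (∀ x, A (φ x) - P (φ x) = φ (A x - P x)) ∧
    (A ζ - P ζ = 0) ∧
    (∀ B : EuclideanSpace ℝ (Fin (2*n+1)) →ₗ[ℝ] EuclideanSpace ℝ (Fin (2*n+1)),
      (∀ X Y, ⟪B X, Y⟫ = -⟪X, B Y⟫) → (∀ X, B (φ X) = φ (B X)) → B ζ = 0 →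
      -(∑ i, ⟪P (B (EuclideanSpace.single i 1)), EuclideanSpace.single i 1⟫) = 0) :=
  stmt12_general n φ A ζ hφ2 hφm hφζ hA
end

section
/- Suppose a Riemannian manifold M of dimension 2n+1 with almost contact metric structure (φ,η,ζ) satisfies the C(α) curvature condition: R(X,Y,Z,W) = R(X,Y,φZ,φW) + α(-g(X,Z)g(Y,W) + g(X,W)g(Y,Z) + g(X,φZ)g(Y,φW) - g(X,φW)g(Y,φZ)) for a smooth function α. Then s - s* = 4n²α and Ric(ζ,ζ) = 2nα, where s* = Σ_{i,j} R(e_i, e_j, φe_j, φe_i). -/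
open RealInnerProductSpace Finset

/-!
Subtracting `R(X,Y,φZ,φW)` from both sides of the `C(α)` condition expresses the summands of
`s - s*` and of `Ric(ζ,ζ)` as `α` times the explicit tensor `cAlphaTensor`, whose traces over an
orthonormal frame of `N = 2n+1` vectors are `(N - 1)²` and `N - 1`. The first trace uses that `φ`
is skew-adjoint with `Σ |φ eᵢ|² = N - 1`, which follows from `φ² = -id + η ⊗ ζ` and the
compatibility of `g` with `φ`; the second only uses `φζ = 0`.
-/

section AlmostContact

variable {V : Type*} [NormedAddCommGroup V] [InnerProductSpace ℝ V] {φ : V →ₗ[ℝ] V} {ζ : V}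

theorem inner_map_eta_eq_zero (hζ : ⟪ζ, ζ⟫ = 1) (hφζ : φ ζ = 0)
    (hφ2 : ∀ X, φ (φ X) = -X + ⟪X, ζ⟫ • ζ) (X : V) : ⟪φ X, ζ⟫ = 0 := by
  have hφ3 : φ (φ (φ X)) = -φ X := by
    rw [hφ2 X, map_add, map_neg, map_smul, hφζ, smul_zero, add_zero]
  have h := congrArg (⟪·, ζ⟫) (hφ2 (φ X))
  simp only [hφ3, inner_neg_left, inner_add_left, real_inner_smul_left, hζ] at h
  linarith

theorem inner_map_right_eq_neg (hζ : ⟪ζ, ζ⟫ = 1) (hφζ : φ ζ = 0)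
    (hφ2 : ∀ X, φ (φ X) = -X + ⟪X, ζ⟫ • ζ)
    (hφm : ∀ X Y, ⟪φ X, φ Y⟫ = ⟪X, Y⟫ - ⟪X, ζ⟫ * ⟪Y, ζ⟫) (X Y : V) :
    ⟪X, φ Y⟫ = -⟪φ X, Y⟫ := by
  have hη := inner_map_eta_eq_zero hζ hφζ hφ2
  have h := hφm X (φ Y)
  rw [hη Y, mul_zero, sub_zero, hφ2 Y, inner_add_right, inner_neg_right,
    real_inner_smul_right, hη X, mul_zero, add_zero] at h
  linarith

/-- The tensor multiplying `α` in the `C(α)` curvature condition. -/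
def cAlphaTensor (φ : V →ₗ[ℝ] V) (X Y Z W : V) : ℝ :=
  -(⟪X, Z⟫ * ⟪Y, W⟫) + ⟪X, W⟫ * ⟪Y, Z⟫ + ⟪X, φ Z⟫ * ⟪Y, φ W⟫ - ⟪X, φ W⟫ * ⟪Y, φ Z⟫

variable {ι : Type*} [Fintype ι] (e : OrthonormalBasis ι ℝ V)

theorem OrthonormalBasis.sum_inner_mul_inner_self (X : V) :
    ∑ i, ⟪e i, X⟫ * ⟪e i, X⟫ = ⟪X, X⟫ := by
  simpa only [real_inner_comm X] using e.sum_inner_mul_inner X X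

theorem sum_inner_map_basis_self (hζ : ⟪ζ, ζ⟫ = 1)
    (hφm : ∀ X Y, ⟪φ X, φ Y⟫ = ⟪X, Y⟫ - ⟪X, ζ⟫ * ⟪Y, ζ⟫) :
    ∑ i, ⟪φ (e i), φ (e i)⟫ = Fintype.card ι - 1 := by
  simp only [hφm, sum_sub_distrib, e.sum_inner_mul_inner_self, hζ, real_inner_self_eq_norm_sq,
    e.orthonormal.1, one_pow, sum_const, card_univ, nsmul_eq_mul, mul_one]

theorem sum_sum_inner_map_mul_inner_map (hskew : ∀ X Y, ⟪X, φ Y⟫ = -⟪φ X, Y⟫) :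
    ∑ i, ∑ j, ⟪e j, φ (e i)⟫ * ⟪e i, φ (e j)⟫ = -∑ i, ⟪φ (e i), φ (e i)⟫ := by
  rw [← sum_neg_distrib]
  refine sum_congr rfl fun i _ => ?_
  simp only [hskew (e i), real_inner_comm (e _) (φ (e i)), ← e.sum_inner_mul_inner (φ (e i)),
    ← sum_neg_distrib]
  exact sum_congr rfl fun j _ => by ring

theorem sum_sum_cAlphaTensor (hζ : ⟪ζ, ζ⟫ = 1)
    (hφm : ∀ X Y, ⟪φ X, φ Y⟫ = ⟪X, Y⟫ - ⟪X, ζ⟫ * ⟪Y, ζ⟫)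
    (hskew : ∀ X Y, ⟪X, φ Y⟫ = -⟪φ X, Y⟫) :
    ∑ i, ∑ j, cAlphaTensor φ (e j) (e i) (e i) (e j) = ((Fintype.card ι : ℝ) - 1) ^ 2 := by
  have hXφX (X : V) : ⟪X, φ X⟫ = 0 := by
    linarith [hskew X X, real_inner_comm X (φ X)]
  have he (i : ι) : ⟪e i, e i⟫ = 1 := inner_self_eq_one_of_norm_eq_one (e.orthonormal.1 i)
  have hδ (i : ι) : ∑ j, ⟪e j, e i⟫ * ⟪e i, e j⟫ = 1 := by
    rw [← he i, ← e.sum_inner_mul_inner (e i) (e i)]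
    exact sum_congr rfl fun j _ => by rw [real_inner_comm (e j), mul_comm]
  simp only [cAlphaTensor, sum_sub_distrib, sum_add_distrib, sum_neg_distrib, hδ, he,
    sum_sum_inner_map_mul_inner_map e hskew, sum_inner_map_basis_self e hζ hφm, hXφX, mul_zero,
    mul_one, sum_const_zero, sum_const, card_univ, nsmul_eq_mul]
  ring

theorem sum_cAlphaTensor_eta (hζ : ⟪ζ, ζ⟫ = 1) (hφζ : φ ζ = 0) :
    ∑ i, cAlphaTensor φ ζ (e i) (e i) ζ = Fintype.card ι - 1 := by
  have he (i : ι) : ⟪e i, e i⟫ = 1 := inner_self_eq_one_of_norm_eq_one (e.orthonormal.1 i)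
  have hterm (i : ι) : cAlphaTensor φ ζ (e i) (e i) ζ = 1 - ⟪e i, ζ⟫ * ⟪e i, ζ⟫ := by
    rw [cAlphaTensor, hφζ, hζ, he, real_inner_comm ζ]
    simp only [inner_zero_right, mul_zero]
    ring
  simp only [hterm, sum_sub_distrib, e.sum_inner_mul_inner_self, hζ, sum_const, card_univ,
    nsmul_eq_mul, mul_one]

end AlmostContact

/-- If an almost contact metric structure of dimension `2n+1`
satisfies the Janssen–Vanhecke `C(α)` curvature condition, then
`s - s* = 4n²α` and `Ric(ζ,ζ) = 2nα` (pointwise, with `R` the `(0,4)` curvature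
tensor and `(e_i)` an orthonormal frame). -/
theorem stmt17 {V : Type*} [NormedAddCommGroup V] [InnerProductSpace ℝ V]
    (n : ℕ) (e : OrthonormalBasis (Fin (2*n+1)) ℝ V)
    (φ : V →ₗ[ℝ] V) (ζ : V) (hζ : ⟪ζ, ζ⟫ = 1) (hφζ : φ ζ = 0)
    (hφ2 : ∀ X, φ (φ X) = -X + ⟪X, ζ⟫ • ζ)
    (hφm : ∀ X Y, ⟪φ X, φ Y⟫ = ⟪X, Y⟫ - ⟪X, ζ⟫ * ⟪Y, ζ⟫)
    (R : V → V → V → V → ℝ)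
    (hR0 : ∀ X Y Z, R X Y Z 0 = 0)
    (α : ℝ)
    (hCα : ∀ X Y Z W, R X Y Z W
      = R X Y (φ Z) (φ W)
        + α * (-(⟪X, Z⟫ * ⟪Y, W⟫) + ⟪X, W⟫ * ⟪Y, Z⟫
          + ⟪X, φ Z⟫ * ⟪Y, φ W⟫ - ⟪X, φ W⟫ * ⟪Y, φ Z⟫)) :
    let s : ℝ := ∑ i, ∑ j, R (e j) (e i) (e i) (e j)
    let sstar : ℝ := ∑ i, ∑ j, R (e i) (e j) (φ (e j)) (φ (e i))
    s - sstar = 4 * (n : ℝ)^2 * α ∧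
    (∑ i, R ζ (e i) (e i) ζ) = 2 * (n : ℝ) * α := by
  intro s sstar
  have hC (X Y Z W : V) : R X Y Z W - R X Y (φ Z) (φ W) = α * cAlphaTensor φ X Y Z W :=
    sub_eq_iff_eq_add'.mpr (hCα X Y Z W)
  have hskew := inner_map_right_eq_neg hζ hφζ hφ2 hφm
  constructor
  · have hs : s - sstar = α * ∑ i, ∑ j, cAlphaTensor φ (e j) (e i) (e i) (e j) := by
      simp only [s, sstar, sum_comm (γ := Fin (2*n+1)) (f := fun i j => R (e i) (e j) _ _),
        ← sum_sub_distrib, hC, mul_sum]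
    rw [hs, sum_sum_cAlphaTensor e hζ hφm hskew, Fintype.card_fin]
    push_cast
    ring
  · have hRic (i) : R ζ (e i) (e i) ζ = α * cAlphaTensor φ ζ (e i) (e i) ζ := by
      rw [← hC, hφζ, hR0, sub_zero]
    rw [sum_congr rfl fun i _ => hRic i, ← mul_sum, sum_cAlphaTensor_eta e hζ hφζ,
      Fintype.card_fin]
    push_cast
    ring
end

section
/- Let (M,g) be a Riemannian manifold and ζ a unit vector field with orthogonal distribution D = ker g(·,ζ). Then the following divergence formula holds: div(-(div ζ)ζ + ∇_ζ ζ) = Ric(ζ,ζ) - (div ζ)² - |T|² + |B|², where B(X,Y) = (1/2)g(∇_X Y + ∇_Y X, ζ) and T(X,Y) = (1/2)g([X,Y], ζ) for X,Y ∈ D are the second fundamental form and integrability tensor of D, and |T|², |B|² are squared norms over an orthonormal frame of D. -/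
/-! Write `d = div ζ`, `h = ∇_ζ ζ`, `a i j = g(∇_{e_i} ζ, e_j)` and `c i j = g(∇_ζ e_i, e_j)`.
Metric compatibility gives `g(∇_X ζ, ζ) = 0`, `g(∇_X e_i, ζ) = -g(∇_X ζ, e_i)` and `c j i = -c i j`.
The left side is `-ζ(d) - d² + Σ g(∇_{e_i} h, e_i) - |h|²` with
`ζ(d) = Σ g(∇_ζ ∇_{e_i} ζ, e_i) + Σ a i j * c i j`, while expanding `∇_{[e_i,ζ]} ζ` in the frame
turns the Ricci term into
`Σ g(∇_{e_i} h, e_i) - Σ g(∇_ζ ∇_{e_i} ζ, e_i) - Σ a i j * a j i - Σ a i j * c i j - |h|²`.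
The two sides therefore differ by `Σ a i j * a j i`, which is `|B|² - |T|²` because
`B i j = -(a i j + a j i) / 2` and `T i j = -(a i j - a j i) / 2`. -/

open Finset

section Derivation

variable {A V : Type*} [CommRing A] (act : V → A → A)

theorem act_zero_of_leibniz (hder : ∀ X a b, act X (a * b) = act X a * b + a * act X b)
    (X : V) : act X 0 = 0 := by
  simpa using hder X 0 0

theorem act_one_of_leibniz (hder : ∀ X a b, act X (a * b) = act X a * b + a * act X b)
    (X : V) : act X 1 = 0 := by
  simpa using hder X 1 1

end Derivation

section FrameCalculus

variable {A : Type*} [CommRing A] {V : Type*} [AddCommGroup V] [Module A V]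
  (g : V →ₗ[A] V →ₗ[A] A) {m : ℕ} (e : Fin m → V) (ζ : V)
  (act : V → A → A) (conn : V → V → V) (bracket : V → V → V)

theorem map_eq_sum_frame {M : Type*} [AddCommGroup M] [Module A M]
    (hcomplete : ∀ X, (∑ i, g X (e i) • e i) + g X ζ • ζ = X) (L : V →ₗ[A] M) (X : V) :
    L X = ∑ i, g X (e i) • L (e i) + g X ζ • L ζ := by
  conv_lhs => rw [← hcomplete X]
  simp only [map_add, map_sum, map_smul]

theorem inner_conn_eq_neg_of_act_eq_zero
    (hcompat : ∀ X Y Z, act X (g Y Z) = g (conn X Y) Z + g Y (conn X Z))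
    {X Y Z : V} (h : act X (g Y Z) = 0) : g (conn X Y) Z = -g Y (conn X Z) :=
  eq_neg_of_add_eq_zero_left (h ▸ hcompat X Y Z).symm

theorem inner_conn_unit_eq_zero [IsAddTorsionFree A] (hgsymm : ∀ X Y, g X Y = g Y X)
    (hder : ∀ X a b, act X (a * b) = act X a * b + a * act X b)
    (hcompat : ∀ X Y Z, act X (g Y Z) = g (conn X Y) Z + g Y (conn X Z))
    (hζ : g ζ ζ = 1) (X : V) : g (conn X ζ) ζ = 0 := by
  have h := inner_conn_eq_neg_of_act_eq_zero g act conn hcompat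
    (X := X) (Y := ζ) (Z := ζ) (by rw [hζ, act_one_of_leibniz act hder])
  rw [hgsymm ζ] at h
  exact two_nsmul_eq_zero.mp (by rw [two_nsmul]; exact add_eq_zero_iff_eq_neg.mpr h)


theorem conn_eq_sum_frame (hcomplete : ∀ X, (∑ i, g X (e i) • e i) + g X ζ • ζ = X)
    (hadd1 : ∀ X Y Z, conn (X + Y) Z = conn X Z + conn Y Z)
    (hsmul1 : ∀ (a : A) X Y, conn (a • X) Y = a • conn X Y) (W Y : V) :
    conn W Y = ∑ i, g W (e i) • conn (e i) Y + g W ζ • conn ζ Y :=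
  map_eq_sum_frame g e ζ hcomplete
    ⟨⟨fun X => conn X Y, fun X X' => hadd1 X X' Y⟩, fun a X => hsmul1 a X Y⟩ W

theorem inner_conn_conn_unit_eq_neg_sum_sq [IsAddTorsionFree A] (hgsymm : ∀ X Y, g X Y = g Y X)
    (hder : ∀ X a b, act X (a * b) = act X a * b + a * act X b)
    (hcompat : ∀ X Y Z, act X (g Y Z) = g (conn X Y) Z + g Y (conn X Z))
    (hcomplete : ∀ X, (∑ i, g X (e i) • e i) + g X ζ • ζ = X) (hζ : g ζ ζ = 1) (X : V) :
    g (conn X (conn X ζ)) ζ = -∑ j, g (conn X ζ) (e j) ^ 2 := by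
  have hunit := inner_conn_unit_eq_zero g ζ act conn hgsymm hder hcompat hζ X
  rw [inner_conn_eq_neg_of_act_eq_zero g act conn hcompat
      (by rw [hunit, act_zero_of_leibniz act hder]),
    map_eq_sum_frame g e ζ hcomplete (g (conn X ζ)) (conn X ζ), hunit]
  simp only [smul_eq_mul, mul_zero, add_zero, sq]

theorem act_sum_inner_conn_frame [IsAddTorsionFree A] (hgsymm : ∀ X Y, g X Y = g Y X)
    (hact_add : ∀ X a b, act X (a + b) = act X a + act X b)
    (hder : ∀ X a b, act X (a * b) = act X a * b + a * act X b)
    (hcompat : ∀ X Y Z, act X (g Y Z) = g (conn X Y) Z + g Y (conn X Z))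
    (hcomplete : ∀ X, (∑ i, g X (e i) • e i) + g X ζ • ζ = X) (hζ : g ζ ζ = 1) (X : V) :
    act X (∑ i, g (conn (e i) ζ) (e i))
      = ∑ i, g (conn X (conn (e i) ζ)) (e i)
        + ∑ i, ∑ j, g (conn (e i) ζ) (e j) * g (conn X (e i)) (e j) := by
  have hsum : act X (∑ i, g (conn (e i) ζ) (e i)) = ∑ i, act X (g (conn (e i) ζ) (e i)) :=
    map_sum (AddMonoidHom.mk' (act X) (hact_add X)) _ _
  rw [hsum, ← sum_add_distrib]
  refine sum_congr rfl fun i _ => ?_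
  rw [hcompat, map_eq_sum_frame g e ζ hcomplete (g (conn (e i) ζ)) (conn X (e i)),
    inner_conn_unit_eq_zero g ζ act conn hgsymm hder hcompat hζ (e i)]
  simp only [smul_eq_mul, zero_mul, add_zero, mul_comm]

theorem inner_conn_bracket_unit [IsAddTorsionFree A] (hgsymm : ∀ X Y, g X Y = g Y X)
    (hder : ∀ X a b, act X (a * b) = act X a * b + a * act X b)
    (hcompat : ∀ X Y Z, act X (g Y Z) = g (conn X Y) Z + g Y (conn X Z))
    (htors : ∀ X Y, conn X Y - conn Y X = bracket X Y)
    (hcomplete : ∀ X, (∑ i, g X (e i) • e i) + g X ζ • ζ = X)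
    (hadd1 : ∀ X Y Z, conn (X + Y) Z = conn X Z + conn Y Z)
    (hsmul1 : ∀ (a : A) X Y, conn (a • X) Y = a • conn X Y)
    (hζ : g ζ ζ = 1) {X : V} (hX : g X ζ = 0) (Y : V) :
    g (conn (bracket X ζ) ζ) Y
      = ∑ j, (g (conn X ζ) (e j) - g (conn ζ X) (e j)) * g (conn (e j) ζ) Y
        + g (conn ζ ζ) X * g (conn ζ ζ) Y := by
  have hbr : ∀ Z, g (bracket X ζ) Z = g (conn X ζ) Z - g (conn ζ X) Z := fun Z => by
    rw [← htors, map_sub, LinearMap.sub_apply]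
  have hbrζ : g (bracket X ζ) ζ = g (conn ζ ζ) X := by
    rw [hbr, inner_conn_unit_eq_zero g ζ act conn hgsymm hder hcompat hζ,
      inner_conn_eq_neg_of_act_eq_zero g act conn hcompat
        (by rw [hX, act_zero_of_leibniz act hder]), hgsymm X, zero_sub, neg_neg]
  rw [conn_eq_sum_frame g e ζ conn hcomplete hadd1 hsmul1 (bracket X ζ) ζ]
  simp only [map_add, map_sum, map_smul, LinearMap.add_apply, LinearMap.sum_apply,
    LinearMap.smul_apply, smul_eq_mul, hbrζ, hbr]


theorem inner_conn_frame_antisymm (hgsymm : ∀ X Y, g X Y = g Y X)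
    (hder : ∀ X a b, act X (a * b) = act X a * b + a * act X b)
    (hcompat : ∀ X Y Z, act X (g Y Z) = g (conn X Y) Z + g Y (conn X Z))
    (horth : ∀ i j, g (e i) (e j) = if i = j then 1 else 0) (X : V) (i j : Fin m) :
    g (conn X (e j)) (e i) = -g (conn X (e i)) (e j) := by
  have hconst : act X (g (e j) (e i)) = 0 := by
    rw [horth]
    split
    · exact act_one_of_leibniz act hder X
    · exact act_zero_of_leibniz act hder X
  rw [inner_conn_eq_neg_of_act_eq_zero g act conn hcompat hconst, hgsymm (e j)]

def curvature (X Y Z : V) : V :=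
  conn X (conn Y Z) - conn Y (conn X Z) - conn (bracket X Y) Z

theorem sum_inner_curvature_frame [IsAddTorsionFree A] (hgsymm : ∀ X Y, g X Y = g Y X)
    (hder : ∀ X a b, act X (a * b) = act X a * b + a * act X b)
    (hcompat : ∀ X Y Z, act X (g Y Z) = g (conn X Y) Z + g Y (conn X Z))
    (htors : ∀ X Y, conn X Y - conn Y X = bracket X Y)
    (hcomplete : ∀ X, (∑ i, g X (e i) • e i) + g X ζ • ζ = X)
    (hadd1 : ∀ X Y Z, conn (X + Y) Z = conn X Z + conn Y Z)
    (hsmul1 : ∀ (a : A) X Y, conn (a • X) Y = a • conn X Y)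
    (hζ : g ζ ζ = 1) (horth : ∀ i j, g (e i) (e j) = if i = j then 1 else 0)
    (heζ : ∀ i, g (e i) ζ = 0) :
    ∑ i, g (curvature conn bracket (e i) ζ ζ) (e i)
      = ∑ i, g (conn (e i) (conn ζ ζ)) (e i) - ∑ i, g (conn ζ (conn (e i) ζ)) (e i)
        - (∑ i, ∑ j, g (conn (e i) ζ) (e j) * g (conn (e j) ζ) (e i)
          + ∑ i, ∑ j, g (conn (e i) ζ) (e j) * g (conn ζ (e i)) (e j)
          + ∑ i, g (conn ζ ζ) (e i) ^ 2) := by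
  have hbr i := inner_conn_bracket_unit g e ζ act conn bracket hgsymm hder hcompat htors
    hcomplete hadd1 hsmul1 hζ (heζ i) (e i)
  have hswap : ∑ i, ∑ j, g (conn ζ (e i)) (e j) * g (conn (e j) ζ) (e i)
      = -∑ i, ∑ j, g (conn (e i) ζ) (e j) * g (conn ζ (e i)) (e j) := by
    rw [sum_comm, ← sum_neg_distrib]
    refine sum_congr rfl fun i _ => ?_
    rw [← sum_neg_distrib]
    refine sum_congr rfl fun j _ => ?_
    rw [inner_conn_frame_antisymm g e act conn hgsymm hder hcompat horth]
    ring
  simp only [curvature, map_sub, LinearMap.sub_apply, sum_sub_distrib, hbr, sum_add_distrib,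
    sub_mul, ← sq]
  linear_combination hswap

def frameDiv (X : V) : A :=
  ∑ i, g (conn (e i) X) (e i) + g (conn ζ X) ζ

theorem frameDiv_add (hadd2 : ∀ X Y Z, conn X (Y + Z) = conn X Y + conn X Z) (X Y : V) :
    frameDiv g e ζ conn (X + Y) = frameDiv g e ζ conn X + frameDiv g e ζ conn Y := by
  simp only [frameDiv, hadd2, map_add, LinearMap.add_apply, sum_add_distrib]
  ring

theorem frameDiv_smul_unit (hLeib : ∀ X (a : A) Y, conn X (a • Y) = act X a • Y + a • conn X Y)
    (hζ : g ζ ζ = 1) (hζe : ∀ i, g ζ (e i) = 0) (f : A) :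
    frameDiv g e ζ conn (f • ζ) = act ζ f + f * frameDiv g e ζ conn ζ := by
  simp only [frameDiv, hLeib, map_add, map_smul, LinearMap.add_apply, LinearMap.smul_apply,
    smul_eq_mul, hζe, hζ, mul_zero, zero_add, mul_one, ← mul_sum]
  ring

theorem frameDiv_unit [IsAddTorsionFree A] (hgsymm : ∀ X Y, g X Y = g Y X)
    (hder : ∀ X a b, act X (a * b) = act X a * b + a * act X b)
    (hcompat : ∀ X Y Z, act X (g Y Z) = g (conn X Y) Z + g Y (conn X Z)) (hζ : g ζ ζ = 1) :
    frameDiv g e ζ conn ζ = ∑ i, g (conn (e i) ζ) (e i) := by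
  rw [frameDiv, inner_conn_unit_eq_zero g ζ act conn hgsymm hder hcompat hζ, add_zero]

section SecondFundamentalForm

variable [Algebra ℝ A]

noncomputable def secondFundamentalForm (i j : Fin m) : A :=
  algebraMap ℝ A (1 / 2) * g (conn (e i) (e j) + conn (e j) (e i)) ζ

noncomputable def integrabilityTensor (i j : Fin m) : A :=
  algebraMap ℝ A (1 / 2) * g (bracket (e i) (e j)) ζ

theorem sum_secondFundamentalForm_sq_sub_sum_integrabilityTensor_sq
    (hgsymm : ∀ X Y, g X Y = g Y X)
    (hder : ∀ X a b, act X (a * b) = act X a * b + a * act X b)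
    (hcompat : ∀ X Y Z, act X (g Y Z) = g (conn X Y) Z + g Y (conn X Z))
    (htors : ∀ X Y, conn X Y - conn Y X = bracket X Y) (heζ : ∀ i, g (e i) ζ = 0) :
    ∑ i, ∑ j, secondFundamentalForm g e ζ conn i j ^ 2
        - ∑ i, ∑ j, integrabilityTensor g e ζ bracket i j ^ 2
      = ∑ i, ∑ j, g (conn (e i) ζ) (e j) * g (conn (e j) ζ) (e i) := by
  have hcross X i : g (conn X (e i)) ζ = -g (conn X ζ) (e i) := by
    rw [inner_conn_eq_neg_of_act_eq_zero g act conn hcompat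
      (by rw [heζ, act_zero_of_leibniz act hder]), hgsymm (e i)]
  have hhalf : algebraMap ℝ A (1 / 2) + algebraMap ℝ A (1 / 2) = 1 := by
    rw [← map_add]
    norm_num
  rw [← sum_sub_distrib]
  refine sum_congr rfl fun i _ => ?_
  rw [← sum_sub_distrib]
  refine sum_congr rfl fun j _ => ?_
  simp only [secondFundamentalForm, integrabilityTensor, ← htors, map_add, map_sub,
    LinearMap.add_apply, LinearMap.sub_apply, hcross]
  linear_combination (algebraMap ℝ A (1 / 2) + algebraMap ℝ A (1 / 2) + 1)
    * g (conn (e i) ζ) (e j) * g (conn (e j) ζ) (e i) * hhalf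

end SecondFundamentalForm

end FrameCalculus

/-- For a unit vector field `ζ` with orthogonal distribution `D`,
the divergence formula
`div(-(div ζ)ζ + ∇_ζ ζ) = Ric(ζ,ζ) - (div ζ)² - |T|² + |B|²` holds, where
`B(X,Y) = (1/2)g(∇_X Y + ∇_Y X, ζ)` and `T(X,Y) = (1/2)g([X,Y], ζ)` on an
orthonormal frame `(e_i)` of `D`.  Vector fields are modelled as a module `V`
over the ring of functions `A`, with a derivation `act`, torsion-free metric
connection `conn`, and `div X = Σ_i g(∇_{e_i}X, e_i) + g(∇_ζ X, ζ)`. -/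
theorem stmt19 {A : Type*} [CommRing A] [Algebra ℝ A]
    {V : Type*} [AddCommGroup V] [Module A V]
    (g : V →ₗ[A] V →ₗ[A] A) (hgsymm : ∀ X Y, g X Y = g Y X)
    (act : V → A → A)
    (hact_add : ∀ X a b, act X (a + b) = act X a + act X b)
    (hder : ∀ X a b, act X (a * b) = act X a * b + a * act X b)
    (conn : V → V → V) (bracket : V → V → V)
    (hadd1 : ∀ X Y Z, conn (X + Y) Z = conn X Z + conn Y Z)
    (hadd2 : ∀ X Y Z, conn X (Y + Z) = conn X Y + conn X Z)
    (hsmul1 : ∀ (a : A) X Y, conn (a • X) Y = a • conn X Y)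
    (hLeib : ∀ X (a : A) Y, conn X (a • Y) = act X a • Y + a • conn X Y)
    (hcompat : ∀ X Y Z, act X (g Y Z) = g (conn X Y) Z + g Y (conn X Z))
    (htors : ∀ X Y, conn X Y - conn Y X = bracket X Y)
    (ζ : V) (hζ : g ζ ζ = 1)
    {m : ℕ} (e : Fin m → V)
    (horth : ∀ i j, g (e i) (e j) = if i = j then 1 else 0)
    (heζ : ∀ i, g (e i) ζ = 0)
    (hcomplete : ∀ X, (∑ i, g X (e i) • e i) + g X ζ • ζ = X) :
    let R : V → V → V → V := fun X Y Z =>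
      conn X (conn Y Z) - conn Y (conn X Z) - conn (bracket X Y) Z
    let div : V → A := fun X => (∑ i, g (conn (e i) X) (e i)) + g (conn ζ X) ζ
    let half : A := algebraMap ℝ A (1/2)
    let Bf : Fin m → Fin m → A := fun i j =>
      half * g (conn (e i) (e j) + conn (e j) (e i)) ζ
    let Tf : Fin m → Fin m → A := fun i j => half * g (bracket (e i) (e j)) ζ
    div (-(div ζ • ζ) + conn ζ ζ)
      = (∑ i, g (R (e i) ζ ζ) (e i)) - (div ζ)^2
        - (∑ i, ∑ j, (Tf i j)^2) + (∑ i, ∑ j, (Bf i j)^2) := by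
  intro R div half Bf Tf
  have : IsAddTorsionFree A := .of_isTorsionFree ℝ A
  have hζe i : g ζ (e i) = 0 := (hgsymm ζ (e i)).trans (heζ i)
  have hact_neg : ∀ a, act ζ (-a) = -act ζ a := map_neg (AddMonoidHom.mk' (act ζ) (hact_add ζ))
  change frameDiv g e ζ conn (-(frameDiv g e ζ conn ζ • ζ) + conn ζ ζ)
    = ∑ i, g (curvature conn bracket (e i) ζ ζ) (e i) - frameDiv g e ζ conn ζ ^ 2
      - ∑ i, ∑ j, integrabilityTensor g e ζ bracket i j ^ 2
      + ∑ i, ∑ j, secondFundamentalForm g e ζ conn i j ^ 2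
  rw [← neg_smul, frameDiv_add g e ζ conn hadd2, frameDiv_smul_unit g e ζ act conn hLeib hζ hζe,
    hact_neg, frameDiv_unit g e ζ act conn hgsymm hder hcompat hζ,
    act_sum_inner_conn_frame g e ζ act conn hgsymm hact_add hder hcompat hcomplete hζ, frameDiv,
    inner_conn_conn_unit_eq_neg_sum_sq g e ζ act conn hgsymm hder hcompat hcomplete hζ,
    sum_inner_curvature_frame g e ζ act conn bracket hgsymm hder hcompat htors hcomplete hadd1
      hsmul1 hζ horth heζ]
  linear_combination -sum_secondFundamentalForm_sq_sub_sum_integrabilityTensor_sq g e ζ act conn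
    bracket hgsymm hder hcompat htors heζ
end
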